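/- arXiv:1802.08673 — 2 statements merged into one kernel-verified Lean document; each statement's English description precedes it below -/
import Mathlib

section
/- Let p, q : ℕ → ℝ be nonincreasing nonnegative summable sequences with entries in [0,1] such that q is majorized by p, and let (h, φ) be entropic functionals, i.e., either (i) h : ℝ → ℝ is strictly increasing and φ : [0,1] → ℝ is strictly concave, or (ii) h is strictly decreasing and φ is strictly convex, with φ(0) = 0 and h(φ(1)) = 0. Then, assuming φ ∘ p and φ ∘ q are summable, H_{(h,φ)}(p) ≤ H_{(h,φ)}(q), where H_{(h,φ)}(p) = h(∑_{i∈ℕ} φ(p i)). -/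
open Finset Filter Topology

/-- Slope comparison for a concave function on `[0,1]`: a secant over an interval that is
componentwise larger has smaller slope. -/
private lemma slope_le_slope_concave {φ : ℝ → ℝ}
    (hφ : ConcaveOn ℝ (Set.Icc (0 : ℝ) 1) φ) {a b c d : ℝ}
    (ha : 0 ≤ a) (hd : d ≤ 1) (hab : a < b) (hcd : c < d) (hac : a ≤ c) (hbd : b ≤ d) :
    (φ d - φ c) / (d - c) ≤ (φ b - φ a) / (b - a) := by
  have hf : ConvexOn ℝ (Set.Icc (0 : ℝ) 1) (fun x => -φ x) := hφ.neg
  have hamem : a ∈ Set.Icc (0 : ℝ) 1 := ⟨ha, le_trans (le_trans hab.le hbd) hd⟩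
  have hbmem : b ∈ Set.Icc (0 : ℝ) 1 := ⟨le_trans ha hab.le, le_trans hbd hd⟩
  have hcmem : c ∈ Set.Icc (0 : ℝ) 1 := ⟨le_trans ha hac, hcd.le.trans hd⟩
  have hdmem : d ∈ Set.Icc (0 : ℝ) 1 := ⟨le_trans ha (le_trans hab.le hbd), hd⟩
  have had : a < d := lt_of_le_of_lt hac hcd
  -- slope of -φ through a : b ≤ d
  have h1 : (-φ b - -φ a) / (b - a) ≤ (-φ d - -φ a) / (d - a) :=
    hf.secant_mono hamem hbmem hdmem (ne_of_gt hab) (ne_of_gt had) hbd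
  -- slope of -φ through d : a ≤ c
  have h2 : (-φ a - -φ d) / (a - d) ≤ (-φ c - -φ d) / (c - d) :=
    hf.secant_mono hdmem hamem hcmem (ne_of_lt had) (ne_of_lt hcd) hac
  have e1 : (-φ a - -φ d) / (a - d) = (-φ d - -φ a) / (d - a) := by
    rw [← neg_div_neg_eq]; ring_nf
  have e2 : (-φ c - -φ d) / (c - d) = (-φ d - -φ c) / (d - c) := by
    rw [← neg_div_neg_eq]; ring_nf
  rw [e1, e2] at h2
  have h3 : (-φ b - -φ a) / (b - a) ≤ (-φ d - -φ c) / (d - c) := h1.trans h2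
  have eb : (-φ b - -φ a) / (b - a) = -((φ b - φ a) / (b - a)) := by ring_nf
  have ed : (-φ d - -φ c) / (d - c) = -((φ d - φ c) / (d - c)) := by ring_nf
  rw [eb, ed] at h3
  linarith

/-- The key Abel-summation-by-induction step for majorization. -/
private lemma star_lemma (p q : ℕ → ℝ) (φ : ℝ → ℝ)
    (hp : ∀ i, p i ∈ Set.Icc (0 : ℝ) 1) (hq : ∀ i, q i ∈ Set.Icc (0 : ℝ) 1)
    (hpa : Antitone p) (hqa : Antitone q)
    (hmaj : ∀ k, ∑ i ∈ Finset.range k, q i ≤ ∑ i ∈ Finset.range k, p i)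
    (hφ : ConcaveOn ℝ (Set.Icc (0 : ℝ) 1) φ) :
    ∀ n (a b : ℝ), 0 ≤ a → a < b → b ≤ 1 →
      (∀ i < n, a ≤ min (p i) (q i) ∧ b ≤ max (p i) (q i)) →
      ∑ i ∈ Finset.range n, (φ (p i) - φ (q i)) ≤
        (φ b - φ a) / (b - a) * ∑ i ∈ Finset.range n, (p i - q i) := by
  intro n
  induction n with
  | zero => intro a b _ _ _ _; simp
  | succ n IH =>
    intro a b ha hab hb1 hcond
    by_cases hpq : p n = q n
    · rw [Finset.sum_range_succ, Finset.sum_range_succ, hpq]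
      have := IH a b ha hab hb1 (fun i hi => hcond i (Nat.lt_succ_of_lt hi))
      simpa using this
    · set m := min (p n) (q n) with hm
      set M := max (p n) (q n) with hM
      have hmM : m < M := min_lt_max.mpr hpq
      have hm0 : 0 ≤ m := le_min (hp n).1 (hq n).1
      have hM1 : M ≤ 1 := max_le (hp n).2 (hq n).2
      have IH' := IH m M hm0 hmM hM1 (fun i hi =>
        ⟨min_le_min (hpa (Nat.le_of_lt hi)) (hqa (Nat.le_of_lt hi)),
         max_le_max (hpa (Nat.le_of_lt hi)) (hqa (Nat.le_of_lt hi))⟩)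
      -- slope value at index n
      have hsub : p n - q n ≠ 0 := sub_ne_zero.mpr hpq
      have hterm : φ (p n) - φ (q n) = (φ M - φ m) / (M - m) * (p n - q n) := by
        rcases lt_or_gt_of_ne hpq with hlt | hgt
        · have hmm : m = p n := min_eq_left hlt.le
          have hMM : M = q n := max_eq_right hlt.le
          have hne : q n - p n ≠ 0 := sub_ne_zero.mpr hlt.ne'
          rw [hmm, hMM, div_mul_eq_mul_div, eq_div_iff hne]
          try ring
        · have hmm : m = q n := min_eq_right hgt.le
          have hMM : M = p n := max_eq_left hgt.le
          have hne : p n - q n ≠ 0 := sub_ne_zero.mpr hgt.ne'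
          rw [hmm, hMM, div_mul_eq_mul_div, eq_div_iff hne]
          try ring
      have hslope : (φ M - φ m) / (M - m) ≤ (φ b - φ a) / (b - a) :=
        slope_le_slope_concave hφ ha hM1 hab hmM (hcond n (Nat.lt_succ_self n)).1
          (hcond n (Nat.lt_succ_self n)).2
      have hE : 0 ≤ ∑ i ∈ Finset.range (n + 1), (p i - q i) := by
        have := hmaj (n + 1)
        rw [Finset.sum_sub_distrib]
        linarith
      calc ∑ i ∈ Finset.range (n + 1), (φ (p i) - φ (q i))
          = ∑ i ∈ Finset.range n, (φ (p i) - φ (q i)) + (φ (p n) - φ (q n)) := by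
            rw [Finset.sum_range_succ]
        _ ≤ (φ M - φ m) / (M - m) * ∑ i ∈ Finset.range n, (p i - q i)
              + (φ M - φ m) / (M - m) * (p n - q n) := by
            rw [hterm]; linarith
        _ = (φ M - φ m) / (M - m) * ∑ i ∈ Finset.range (n + 1), (p i - q i) := by
            rw [Finset.sum_range_succ]; ring
        _ ≤ (φ b - φ a) / (b - a) * ∑ i ∈ Finset.range (n + 1), (p i - q i) :=
            mul_le_mul_of_nonneg_right hslope hE

/-- Core inequality: Schur-concavity of `∑' φ` for concave `φ` with `φ 0 = 0`. -/
private lemma core_lemma (p q : ℕ → ℝ) (φ : ℝ → ℝ)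
    (hp : ∀ i, p i ∈ Set.Icc (0 : ℝ) 1) (hq : ∀ i, q i ∈ Set.Icc (0 : ℝ) 1)
    (hpa : Antitone p) (hqa : Antitone q)
    (hps : Summable p) (hqs : Summable q)
    (hmaj : ∀ k, ∑ i ∈ Finset.range k, q i ≤ ∑ i ∈ Finset.range k, p i)
    (htot : ∑' i, q i = ∑' i, p i)
    (hφ : ConcaveOn ℝ (Set.Icc (0 : ℝ) 1) φ) (hφ0 : φ 0 = 0)
    (hsp : Summable (fun i => φ (p i))) (hsq : Summable (fun i => φ (q i))) :
    ∑' i, φ (p i) ≤ ∑' i, φ (q i) := by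
  -- partial sums of the difference
  set T : ℕ → ℝ := fun n => ∑ i ∈ Finset.range n, (φ (p i) - φ (q i)) with hT
  set L : ℝ := ∑' i, φ (p i) - ∑' i, φ (q i) with hL
  -- main bound at an index where p n ≠ q n
  have keybound : ∀ n, p n ≠ q n →
      T (n + 1) ≤ (φ (max (p n) (q n)) - φ (min (p n) (q n))) /
        (max (p n) (q n) - min (p n) (q n)) *
        ((∑' i, q (i + (n + 1))) - ∑' i, p (i + (n + 1))) := by
    intro n hpq
    have hmM : min (p n) (q n) < max (p n) (q n) := min_lt_max.mpr hpq
    have hstar := star_lemma p q φ hp hq hpa hqa hmaj hφ (n + 1)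
      (min (p n) (q n)) (max (p n) (q n))
      (le_min (hp n).1 (hq n).1) hmM (max_le (hp n).2 (hq n).2)
      (fun i hi => by
        have hin : i ≤ n := Nat.lt_succ_iff.mp hi
        exact ⟨min_le_min (hpa hin) (hqa hin), max_le_max (hpa hin) (hqa hin)⟩)
    have hEp := Summable.sum_add_tsum_nat_add (n + 1) hps
    have hEq := Summable.sum_add_tsum_nat_add (n + 1) hqs
    have hE : ∑ i ∈ Finset.range (n + 1), (p i - q i)
        = (∑' i, q (i + (n + 1))) - ∑' i, p (i + (n + 1)) := by
      rw [Finset.sum_sub_distrib]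
      have h1 : ∑ i ∈ Finset.range (n+1), p i = (∑' i, p i) - ∑' i, p (i + (n+1)) := by
        linarith
      have h2 : ∑ i ∈ Finset.range (n+1), q i = (∑' i, q i) - ∑' i, q (i + (n+1)) := by
        linarith
      rw [h1, h2, htot]; ring
    rw [hE] at hstar
    exact hstar
  -- tail bound: for indices with p n ≠ q n, T (n+1) ≤ max 0 (tail of φ ∘ q)
  have tailbound : ∀ n, p n ≠ q n → T (n + 1) ≤ max 0 (∑' i, φ (q (i + (n + 1)))) := by
    intro n hpq
    set m := min (p n) (q n) with hm
    set M := max (p n) (q n) with hM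
    have hmM : m < M := min_lt_max.mpr hpq
    set s := (φ M - φ m) / (M - m) with hs
    have hkey := keybound n hpq
    have hqtail : Summable (fun i => q (i + (n + 1))) := (summable_nat_add_iff (n+1)).mpr hqs
    have hptail : Summable (fun i => p (i + (n + 1))) := (summable_nat_add_iff (n+1)).mpr hps
    have hφqtail : Summable (fun i => φ (q (i + (n + 1)))) :=
      (summable_nat_add_iff (n+1)).mpr hsq
    have hptail0 : 0 ≤ ∑' i, p (i + (n + 1)) := tsum_nonneg fun i => (hp _).1
    rcases le_or_gt s 0 with hs0 | hs0
    · -- slope nonpositive: product is ≤ 0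
      have hEpos : 0 ≤ (∑' i, q (i + (n + 1))) - ∑' i, p (i + (n + 1)) := by
        have := hmaj (n + 1)
        have hEp := Summable.sum_add_tsum_nat_add (n + 1) hps
        have hEq := Summable.sum_add_tsum_nat_add (n + 1) hqs
        have ht := htot
        linarith
      have : s * ((∑' i, q (i + (n + 1))) - ∑' i, p (i + (n + 1))) ≤ 0 :=
        mul_nonpos_of_nonpos_of_nonneg hs0 hEpos
      exact hkey.trans (this.trans (le_max_left _ _))
    · -- slope positive
      have hterm : ∀ i, s * q (i + (n + 1)) ≤ φ (q (i + (n + 1))) := by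
        intro i
        set t := q (i + (n + 1)) with ht
        rcases eq_or_lt_of_le (hq (i + (n + 1))).1 with h0 | h0
        · have ht0 : t = 0 := by rw [ht, ← h0]
          rw [ht0, mul_zero, hφ0]
        · have htM : t ≤ M :=
            le_trans (hqa (by omega : n ≤ i + (n + 1))) (le_max_right (p n) (q n))
          have hslope : s ≤ (φ t - φ 0) / (t - 0) :=
            slope_le_slope_concave hφ le_rfl (max_le (hp n).2 (hq n).2) h0 hmM
              (le_min (hp n).1 (hq n).1) htM
          rw [hφ0, sub_zero, sub_zero] at hslope
          calc s * t ≤ (φ t / t) * t := mul_le_mul_of_nonneg_right hslope h0.le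
            _ = φ t := div_mul_cancel₀ _ (ne_of_gt h0)
      have h1 : s * ((∑' i, q (i + (n + 1))) - ∑' i, p (i + (n + 1)))
          ≤ s * ∑' i, q (i + (n + 1)) := by
        have : (∑' i, q (i + (n + 1))) - ∑' i, p (i + (n + 1)) ≤ ∑' i, q (i + (n + 1)) := by
          linarith
        exact mul_le_mul_of_nonneg_left this hs0.le
      have h2 : s * ∑' i, q (i + (n + 1)) ≤ ∑' i, φ (q (i + (n + 1))) := by
        rw [← tsum_mul_left]
        exact Summable.tsum_le_tsum hterm (hqtail.mul_left s) hφqtail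
      exact hkey.trans (h1.trans (h2.trans (le_max_right _ _)))
  -- two cases: eventually equal, or differing infinitely often
  suffices hL0 : L ≤ 0 by
    rw [hL] at hL0; linarith
  by_cases hB : ∃ N, ∀ n, N ≤ n → p n = q n
  · -- eventually equal
    obtain ⟨N, hN⟩ := hB
    induction N with
    | zero =>
      have : ∀ i, φ (p i) = φ (q i) := fun i => by rw [hN i (Nat.zero_le i)]
      rw [hL]
      have : ∑' i, φ (p i) = ∑' i, φ (q i) := tsum_congr this
      linarith
    | succ N IHN =>
      by_cases hpqN : p N = q N
      · refine IHN (fun n hn => ?_)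
        rcases eq_or_lt_of_le hn with h | h
        · rw [← h]; exact hpqN
        · exact hN n h
      · have hkey := tailbound N hpqN
        have htail0 : (∑' i, φ (q (i + (N + 1)))) = ∑' i, φ (p (i + (N + 1))) :=
          tsum_congr fun i => by rw [hN (i + (N + 1)) (Nat.le_add_left _ _)]
        -- better: use keybound with zero tail difference
        have hkey2 := keybound N hpqN
        have htaileq : (∑' i, q (i + (N + 1))) = ∑' i, p (i + (N + 1)) :=
          tsum_congr fun i => (hN (i + (N + 1)) (Nat.le_add_left _ _)).symm
        rw [htaileq, sub_self, mul_zero] at hkey2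
        -- L = T (N+1) + tail difference, and tail difference is 0
        have hsd : Summable (fun i => φ (p i) - φ (q i)) := hsp.sub hsq
        have hdec := Summable.sum_add_tsum_nat_add (N + 1) hsd
        have htail : (∑' i, (φ (p (i + (N + 1))) - φ (q (i + (N + 1))))) = 0 := by
          have : ∀ i, φ (p (i + (N + 1))) - φ (q (i + (N + 1))) = 0 := fun i => by
            rw [hN (i + (N + 1)) (Nat.le_add_left _ _)]; ring
          rw [tsum_congr this, tsum_zero]
        have hLT : L = T (N + 1) := by
          rw [hL, hT]
          have := Summable.tsum_sub hsp hsq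
          rw [← this, ← hdec, htail, add_zero]
        rw [hLT]
        exact hkey2
  · -- differing infinitely often
    push_neg at hB
    have hTlim : Tendsto T atTop (𝓝 L) := by
      have := (hsp.hasSum.sub hsq.hasSum).tendsto_sum_nat
      simpa [hT, Finset.sum_sub_distrib] using this
    have hRlim : Tendsto (fun m => ∑' i, φ (q (i + m))) atTop (𝓝 0) := by
      have heq : (fun m => ∑' i, φ (q (i + m)))
          = fun m => (∑' i, φ (q i)) - ∑ i ∈ Finset.range m, φ (q i) := by
        funext m
        have := Summable.sum_add_tsum_nat_add m hsq
        linarith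
      rw [heq]
      have := hsq.hasSum.tendsto_sum_nat
      have h2 : Tendsto (fun m => (∑' i, φ (q i)) - ∑ i ∈ Finset.range m, φ (q i)) atTop
          (𝓝 ((∑' i, φ (q i)) - ∑' i, φ (q i))) := (tendsto_const_nhds).sub this
      simpa using h2
    refine le_of_forall_pos_le_add fun ε hε => ?_
    have hev1 : ∀ᶠ n in atTop, L - ε / 2 < T n :=
      hTlim.eventually (eventually_gt_nhds (by linarith))
    have hev2 : ∀ᶠ m in atTop, (∑' i, φ (q (i + m))) < ε / 2 :=
      hRlim.eventually (eventually_lt_nhds (by linarith))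
    obtain ⟨N1, hN1⟩ := eventually_atTop.mp hev1
    obtain ⟨N2, hN2⟩ := eventually_atTop.mp hev2
    obtain ⟨n, hn, hpq⟩ := hB (max N1 N2)
    have h1 : L - ε / 2 < T (n + 1) :=
      hN1 (n + 1) (le_trans (le_trans (le_max_left _ _) hn) (Nat.le_succ n))
    have h2 : (∑' i, φ (q (i + (n + 1)))) < ε / 2 :=
      hN2 (n + 1) (le_trans (le_trans (le_max_right _ _) hn) (Nat.le_succ n))
    have h3 := tailbound n hpq
    have h4 : max 0 (∑' i, φ (q (i + (n + 1)))) ≤ ε / 2 :=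
      max_le (by linarith) h2.le
    linarith

/-- Schur-concavity of the (h,φ)-entropies `H_{(h,φ)}(p) = h (∑' i, φ (p i))` on infinite
sequences: if `q` is majorized by `p` (both nonincreasing, nonnegative, summable, with
entries in `[0,1]`) and `(h, φ)` are entropic functionals — either `h` strictly increasing
and `φ` strictly concave on `[0,1]`, or `h` strictly decreasing and `φ` strictly convex on
`[0,1]`, with `φ 0 = 0` and `h (φ 1) = 0` — then `H_{(h,φ)}(p) ≤ H_{(h,φ)}(q)`,
assuming `φ ∘ p` and `φ ∘ q` summable. -/
theorem entropy_le_of_majorized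
    (p q : ℕ → ℝ) (h φ : ℝ → ℝ)
    (hp : ∀ i, p i ∈ Set.Icc (0 : ℝ) 1)
    (hq : ∀ i, q i ∈ Set.Icc (0 : ℝ) 1)
    (hpa : Antitone p) (hqa : Antitone q)
    (hps : Summable p) (hqs : Summable q)
    (hmaj : ∀ k, ∑ i ∈ Finset.range k, q i ≤ ∑ i ∈ Finset.range k, p i)
    (htot : ∑' i, q i = ∑' i, p i)
    (hent : (StrictMono h ∧ StrictConcaveOn ℝ (Set.Icc (0 : ℝ) 1) φ) ∨
            (StrictAnti h ∧ StrictConvexOn ℝ (Set.Icc (0 : ℝ) 1) φ))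
    (hφ0 : φ 0 = 0) (hh1 : h (φ 1) = 0)
    (hsp : Summable (fun i => φ (p i))) (hsq : Summable (fun i => φ (q i))) :
    h (∑' i, φ (p i)) ≤ h (∑' i, φ (q i)) := by
  rcases hent with ⟨hmono, hconc⟩ | ⟨hanti, hconv⟩
  · exact hmono.monotone
      (core_lemma p q φ hp hq hpa hqa hps hqs hmaj htot hconc.concaveOn hφ0 hsp hsq)
  · have hneg : ConcaveOn ℝ (Set.Icc (0 : ℝ) 1) (fun x => -φ x) := hconv.convexOn.neg
    have := core_lemma p q (fun x => -φ x) hp hq hpa hqa hps hqs hmaj htot hneg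
      (by simp [hφ0]) hsp.neg hsq.neg
    rw [tsum_neg, tsum_neg] at this
    exact hanti.antitone (by linarith)
end

section
/- Let ρ be a density operator (a positive, trace-class operator of trace one) on a separable complex Hilbert space H, and let {e n}_{n∈ℕ} be an orthonormal basis of H. Then the diagonal sequence {⟨e n, ρ e n⟩}_{n∈ℕ}, rearranged in decreasing order, is majorized by the eigenvalue sequence {λ n}_{n∈ℕ} of ρ sorted in decreasing order with multiplicity: ∑_{n=1}^{k} p n ≤ ∑_{n=1}^{k} λ n for all k ∈ ℕ, and ∑_{n∈ℕ} p n = ∑_{n∈ℕ} λ n = 1, where p is the decreasing rearrangement of the diagonal. -/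
/-!
Write `a n m = |⟪v m, e (σ n)⟫|²`. The spectral decomposition gives `p n = ∑ₘ λₘ a n m`; by
Bessel each row of `a` sums to at most one, and by Parseval each column sums to exactly one.
Summing the nonnegative double series by columns gives `∑ p = ∑ λ = 1`. For the partial sums,
`cₘ = ∑_{n<k} a n m` lies in `[0, 1]` with total mass at most `k`, and against an antitone
weight `λ` such a `c` is best concentrated on the first `k` indices.
-/

open scoped InnerProductSpace
open Finset

theorem tsum_mul_le_sum_range_of_antitone {lam c : ℕ → ℝ} {k : ℕ}
    (hlam0 : ∀ m, 0 ≤ lam m) (hlam_anti : Antitone lam) (hlam : Summable lam)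
    (hc0 : ∀ m, 0 ≤ c m) (hc1 : ∀ m, c m ≤ 1) (hc : Summable c) (hck : ∑' m, c m ≤ k) :
    ∑' m, lam m * c m ≤ ∑ m ∈ range k, lam m := by
  set excess : ℕ → ℝ := fun m => if m ∈ range k then lam m - lam k else 0
  have hexcess : HasSum excess (∑ m ∈ range k, (lam m - lam k)) := by
    rw [← sum_congr rfl fun m hm => (if_pos hm : excess m = lam m - lam k)]
    exact hasSum_sum_of_ne_finset_zero fun m hm => if_neg hm
  -- Pointwise, `lam m * c m ≤ lam k * c m + (lam m - lam k)⁺`, using `0 ≤ c m ≤ 1`.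
  have hbound : ∀ m, lam m * c m ≤ lam k * c m + excess m := by
    intro m
    by_cases hm : m ∈ range k
    · simp only [excess, if_pos hm]
      nlinarith [hc1 m, hlam_anti (mem_range.1 hm).le]
    · simp only [excess, if_neg hm, add_zero]
      exact mul_le_mul_of_nonneg_right (hlam_anti (not_lt.1 (mem_range.not.1 hm))) (hc0 m)
  have hsummable : Summable fun m => lam m * c m :=
    hlam.of_nonneg_of_le (fun m => mul_nonneg (hlam0 m) (hc0 m))
      (fun m => mul_le_of_le_one_right (hlam0 m) (hc1 m))
  calc ∑' m, lam m * c m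
      ≤ lam k * ∑' m, c m + ∑ m ∈ range k, (lam m - lam k) :=
        hasSum_le hbound hsummable.hasSum ((hc.hasSum.mul_left (lam k)).add hexcess)
    _ ≤ lam k * k + ∑ m ∈ range k, (lam m - lam k) := by
        gcongr
        exact hlam0 k
    _ = ∑ m ∈ range k, lam m := by
        rw [sum_sub_distrib, sum_const, card_range, nsmul_eq_mul]
        ring

theorem sum_le_sum_range_card_of_substochastic {ι : Type*} {lam : ℕ → ℝ} {p : ι → ℝ}
    (a : ι → ℕ → ℝ) (s : Finset ι)
    (hlam0 : ∀ m, 0 ≤ lam m) (hlam_anti : Antitone lam) (hlam : Summable lam)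
    (ha0 : ∀ n m, 0 ≤ a n m) (hcol : ∀ m, ∑ n ∈ s, a n m ≤ 1)
    (hrow : ∀ n, Summable (a n)) (hrow_le : ∀ n, ∑' m, a n m ≤ 1)
    (hp : ∀ n, HasSum (fun m => lam m * a n m) (p n)) :
    ∑ n ∈ s, p n ≤ ∑ m ∈ range s.card, lam m := by
  have hmix : HasSum (fun m => lam m * ∑ n ∈ s, a n m) (∑ n ∈ s, p n) := by
    simpa only [mul_sum] using hasSum_sum fun n _ => hp n
  rw [← hmix.tsum_eq]
  refine tsum_mul_le_sum_range_of_antitone hlam0 hlam_anti hlam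
    (fun m => sum_nonneg fun n _ => ha0 n m) hcol (summable_sum fun n _ => hrow n) ?_
  calc ∑' m, ∑ n ∈ s, a n m = ∑ n ∈ s, ∑' m, a n m := Summable.tsum_finsetSum fun n _ => hrow n
    _ ≤ ∑ n ∈ s, (1 : ℝ) := sum_le_sum fun n _ => hrow_le n
    _ = s.card := by simp

theorem hasSum_row_sums_of_nonneg {α β : Type*} {f : α → β → ℝ} {g : β → ℝ} {r : α → ℝ}
    {t : ℝ} (hf : ∀ a b, 0 ≤ f a b) (hcol : ∀ b, HasSum (fun a => f a b) (g b)) (hg : HasSum g t)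
    (hrow : ∀ a, HasSum (f a) (r a)) : HasSum r t := by
  have hsum : Summable fun q : β × α => f q.2 q.1 :=
    (summable_prod_of_nonneg fun q => hf q.2 q.1).2
      ⟨fun b => (hcol b).summable, hg.summable.congr fun b => (hcol b).tsum_eq.symm⟩
  have htot : HasSum (fun q : β × α => f q.2 q.1) t :=
    (hsum.hasSum.prod_fiberwise hcol).unique hg ▸ hsum.hasSum
  exact ((Equiv.prodComm α β).hasSum_iff.2 htot).prod_fiberwise hrow

section Inner

variable {𝕜 E : Type*} [RCLike 𝕜] [NormedAddCommGroup E] [InnerProductSpace 𝕜 E]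

theorem inner_mul_inner_swap_eq_norm_sq (x y : E) :
    ⟪x, y⟫_𝕜 * ⟪y, x⟫_𝕜 = ((‖⟪x, y⟫_𝕜‖ ^ 2 : ℝ) : 𝕜) := by
  rw [← inner_conj_symm y x, RCLike.mul_conj, RCLike.ofReal_pow]

theorem HilbertBasis.hasSum_norm_inner_sq {ι : Type*} (b : HilbertBasis ι 𝕜 E) (x : E) :
    HasSum (fun i => ‖⟪x, b i⟫_𝕜‖ ^ 2) (‖x‖ ^ 2) := by
  have h := b.hasSum_inner_mul_inner x x
  simp only [inner_mul_inner_swap_eq_norm_sq, inner_self_eq_norm_sq_to_K] at h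
  exact (RCLike.hasSum_ofReal 𝕜).1 (by exact_mod_cast h)

end Inner

theorem hasSum_mul_norm_inner_sq_of_eq_tsum {H : Type*} [NormedAddCommGroup H]
    [InnerProductSpace ℂ H] [CompleteSpace H] {T : H →L[ℂ] H} {lam : ℕ → ℝ} {v : ℕ → H}
    (hlam : Summable lam) (hv : Orthonormal ℂ v)
    (hT : ∀ x, T x = ∑' n, lam n • (⟪v n, x⟫_ℂ • v n)) (x : H) :
    HasSum (fun n => lam n * ‖⟪v n, x⟫_ℂ‖ ^ 2) (⟪x, T x⟫_ℂ).re := by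
  have hseries : HasSum (fun n => lam n • (⟪v n, x⟫_ℂ • v n)) (T x) := by
    refine hT x ▸ (Summable.of_norm_bounded (hlam.abs.mul_right ‖x‖) fun n => ?_).hasSum
    rw [norm_smul, norm_smul, hv.norm_eq_one, mul_one, Real.norm_eq_abs]
    gcongr
    simpa [hv.norm_eq_one] using norm_inner_le_norm (𝕜 := ℂ) (v n) x
  convert Complex.hasSum_re (hseries.mapL (innerSL ℂ x)) using 2 with n
  · rw [innerSL_apply_apply, RCLike.real_smul_eq_coe_smul (K := ℂ), inner_smul_right,
      inner_smul_right, mul_comm ⟪v n, x⟫_ℂ, inner_mul_inner_swap_eq_norm_sq, norm_inner_symm]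
    norm_cast
  · rfl

theorem diagonal_majorized_by_eigenvalues_general
    {H : Type*} [NormedAddCommGroup H] [InnerProductSpace ℂ H] [CompleteSpace H]
    (ρ : H →L[ℂ] H)
    (lam : ℕ → ℝ) (v : ℕ → H)
    (hlam0 : ∀ n, 0 ≤ lam n) (hlam_anti : Antitone lam)
    (hlam_sum : Summable lam) (hlam1 : ∑' n, lam n = 1)
    (hv : Orthonormal ℂ v)
    (hspec : ∀ x, ρ x = ∑' n, lam n • (⟪v n, x⟫_ℂ • v n))
    (e : HilbertBasis ℕ ℂ H)
    (p : ℕ → ℝ) (σ : ℕ ≃ ℕ)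
    (hpdiag : ∀ n, p n = (⟪e (σ n), ρ (e (σ n))⟫_ℂ).re) :
    (∀ k, ∑ n ∈ Finset.range k, p n ≤ ∑ n ∈ Finset.range k, lam n) ∧
      Summable p ∧ ∑' n, p n = 1 := by
  set a : ℕ → ℕ → ℝ := fun n m => ‖⟪v m, e (σ n)⟫_ℂ‖ ^ 2
  have hrow : ∀ n, HasSum (fun m => lam m * a n m) (p n) := fun n =>
    (hpdiag n).symm ▸ hasSum_mul_norm_inner_sq_of_eq_tsum hlam_sum hv hspec (e (σ n))
  have hcol : ∀ m, HasSum (fun n => a n m) 1 := by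
    intro m
    have h := e.hasSum_norm_inner_sq (v m)
    rw [hv.norm_eq_one, one_pow] at h
    exact σ.hasSum_iff.2 h
  have hp : HasSum p 1 :=
    hasSum_row_sums_of_nonneg (fun n m => mul_nonneg (hlam0 m) (sq_nonneg _))
      (fun m => (hcol m).mul_left (lam m))
      (by simpa only [mul_one] using hlam1 ▸ hlam_sum.hasSum) hrow
  refine ⟨fun k => ?_, hp.summable, hp.tsum_eq⟩
  simpa using sum_le_sum_range_card_of_substochastic a (range k) hlam0 hlam_anti hlam_sum
    (fun _ _ => sq_nonneg _) (fun m => sum_le_hasSum _ (fun _ _ => sq_nonneg _) (hcol m))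
    (fun n => hv.inner_products_summable _)
    (fun n => by simpa [e.orthonormal.norm_eq_one] using hv.tsum_inner_products_le (e (σ n))) hrow

/-- (Consequence of Arveson–Kadison, Theorem 4.1.)  Let `ρ` be a density operator (positive,
trace-class, trace one) on a separable complex Hilbert space, with eigenvalue sequence `lam`
sorted in decreasing order with multiplicity (encoded by the spectral decomposition
`ρ x = ∑' n, lam n • ⟪v n, x⟫ • v n` with `v` orthonormal), and let `e` be an orthonormal
basis.  Then the decreasing rearrangement `p` of the diagonal `⟪e n, ρ (e n)⟫` is majorized
by `lam`: all partial sums of `p` are bounded by those of `lam`, and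
`∑' n, p n = ∑' n, lam n = 1`. -/
theorem diagonal_majorized_by_eigenvalues
    {H : Type*} [NormedAddCommGroup H] [InnerProductSpace ℂ H] [CompleteSpace H]
    (ρ : H →L[ℂ] H) (hpos : ρ.IsPositive)
    (lam : ℕ → ℝ) (v : ℕ → H)
    (hlam0 : ∀ n, 0 ≤ lam n) (hlam_anti : Antitone lam)
    (hlam_sum : Summable lam) (hlam1 : ∑' n, lam n = 1)
    (hv : Orthonormal ℂ v)
    (hspec : ∀ x, ρ x = ∑' n, lam n • (⟪v n, x⟫_ℂ • v n))
    (e : HilbertBasis ℕ ℂ H)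
    (p : ℕ → ℝ) (σ : ℕ ≃ ℕ)
    (hpdiag : ∀ n, p n = (⟪e (σ n), ρ (e (σ n))⟫_ℂ).re)
    (hpa : Antitone p) :
    (∀ k, ∑ n ∈ Finset.range k, p n ≤ ∑ n ∈ Finset.range k, lam n) ∧
      Summable p ∧ ∑' n, p n = 1 :=
  diagonal_majorized_by_eigenvalues_general ρ lam v hlam0 hlam_anti hlam_sum hlam1 hv hspec e p σ
    hpdiag
end
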